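/- For n ≥ 1, the number of permutations of {1,...,2n} all of whose cycle lengths are odd equals the number of permutations of {1,...,2n} all of whose cycle lengths are even, and both equal ((2n-1)!!)^2. -/

import Mathlib

/-!
Removing the point `0` from a permutation of `Fin (m + 1)` (`Equiv.Perm.decomposeFin`) either
deletes the fixed point `0` or shortens the cycle through `0` by one, leaving all other cycles
unchanged. Keeping track of the length of the cycle through a marked point therefore gives, for
`A(m)` the number of permutations of `Fin m` all of whose cycles are odd (resp. even),
`A_odd(m + 2) = A_odd(m + 1) + (m + 1) m A_odd(m)` and `A_even(m + 2) = (m + 1)² A_even(m)`;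
both recursions are solved by `A(2n) = ((2n - 1)‼)²`.
-/

open Equiv Equiv.Perm Function Nat

theorem Function.minimalPeriod_eq_of_iterate_apply {α β : Type*} {f : α → α} {g : β → β}
    {h : α → β} (hh : Injective h) {x : α} (hx : ∀ j, g^[j] (h x) = h (f^[j] x)) :
    minimalPeriod g (h x) = minimalPeriod f x :=
  minimalPeriod_eq_minimalPeriod_iff.2 fun j => by
    simp only [IsPeriodicPt, IsFixedPt, hx, hh.eq_iff]

namespace Equiv.Perm

section Periods

variable {α : Type*}

theorem minimalPeriod_pos [Finite α] (f : Perm α) (x : α) : 0 < minimalPeriod f x :=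
  minimalPeriod_pos_of_mem_periodicPts (f.injective.mem_periodicPts x)

theorem SameCycle.minimalPeriod_eq [Finite α] {f : Perm α} {x y : α} (h : f.SameCycle x y) :
    minimalPeriod f x = minimalPeriod f y := by
  obtain ⟨i, rfl⟩ := h.exists_nat_pow_eq
  rw [← iterate_eq_pow, minimalPeriod_apply_iterate (f.injective.mem_periodicPts x)]

theorem minimalPeriod_conj_apply (c f : Perm α) (x : α) :
    minimalPeriod (c * f * c⁻¹) (c x) = minimalPeriod f x :=
  minimalPeriod_eq_of_iterate_apply c.injective fun j => by
    rw [iterate_eq_pow, iterate_eq_pow, conj_pow]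
    simp [mul_apply]

end Periods

section DecomposeFin

variable {m : ℕ} (e : Perm (Fin m))

theorem decomposeFin_symm_zero_apply_succ (x : Fin m) :
    decomposeFin.symm (0, e) x.succ = (e x).succ := by
  rw [decomposeFin_symm_apply_succ, swap_self, refl_apply]

theorem minimalPeriod_decomposeFin_symm_zero_zero :
    minimalPeriod (decomposeFin.symm (0, e)) 0 = 1 :=
  minimalPeriod_eq_one_iff_isFixedPt.2 (decomposeFin_symm_apply_zero 0 e)

theorem minimalPeriod_decomposeFin_symm_zero_succ (x : Fin m) :
    minimalPeriod (decomposeFin.symm (0, e)) x.succ = minimalPeriod e x :=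
  minimalPeriod_eq_of_iterate_apply (Fin.succ_injective m) fun j =>
    (Semiconj.iterate_right (fun y => (decomposeFin_symm_zero_apply_succ e y).symm) j x).symm

theorem sameCycle_decomposeFin_symm_zero_zero_iff (y : Fin (m + 1)) :
    (decomposeFin.symm (0, e)).SameCycle 0 y ↔ y = 0 :=
  ⟨fun h => (h.eq_of_left (decomposeFin_symm_apply_zero 0 e)).symm, fun h => h ▸ .refl _ _⟩

/-- Together with `decomposeFin_symm_apply_zero`: the point `0` is spliced into the cycle of `q`,
between `e⁻¹ q` and `q`. -/
theorem decomposeFin_symm_succ_apply_succ (q x : Fin m) :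
    decomposeFin.symm (q.succ, e) x.succ = if e x = q then 0 else (e x).succ := by
  rw [decomposeFin_symm_apply_succ]
  split_ifs with h
  · rw [h, swap_apply_right]
  · exact swap_apply_of_ne_of_ne (Fin.succ_ne_zero _) (mt (Fin.succ_injective _ ·) h)

variable {e} in
theorem iterate_decomposeFin_symm_succ_apply_succ {q x : Fin m} (h : ¬e.SameCycle q x)
    (j : ℕ) : (decomposeFin.symm (q.succ, e))^[j] x.succ = (e^[j] x).succ := by
  induction j with
  | zero => rfl
  | succ j ih =>
    rw [iterate_succ_apply', ih, decomposeFin_symm_succ_apply_succ, if_neg,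
      iterate_succ_apply']
    rw [← iterate_succ_apply' e, iterate_eq_pow]
    intro hq
    exact h (hq ▸ (sameCycle_pow_right.2 (SameCycle.refl e x)).symm)

theorem iterate_decomposeFin_symm_succ_zero (q : Fin m) {j : ℕ} (hj : j < minimalPeriod e q) :
    (decomposeFin.symm (q.succ, e))^[j + 1] 0 = (e^[j] q).succ := by
  induction j with
  | zero => exact decomposeFin_symm_apply_zero _ e
  | succ j ih =>
    rw [iterate_succ_apply', ih (by omega), decomposeFin_symm_succ_apply_succ, if_neg,
      iterate_succ_apply']
    rw [← iterate_succ_apply' e]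
    exact not_isPeriodicPt_of_pos_of_lt_minimalPeriod (succ_ne_zero j) hj

theorem minimalPeriod_decomposeFin_symm_succ_zero (q : Fin m) :
    minimalPeriod (decomposeFin.symm (q.succ, e)) 0 = minimalPeriod e q + 1 := by
  set σ := decomposeFin.symm (q.succ, e)
  obtain ⟨k, hk⟩ := exists_eq_add_one_of_ne_zero (minimalPeriod_pos e q).ne'
  have h_periodic : IsPeriodicPt σ (k + 2) 0 := by
    rw [IsPeriodicPt, IsFixedPt, iterate_succ_apply', iterate_decomposeFin_symm_succ_zero e q
      (by omega), decomposeFin_symm_succ_apply_succ, if_pos]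
    have h_return := iterate_minimalPeriod (f := e) (x := q)
    rwa [hk, iterate_succ_apply'] at h_return
  obtain ⟨j, hj⟩ := exists_eq_add_one_of_ne_zero (minimalPeriod_pos σ 0).ne'
  have h_ge : minimalPeriod e q ≤ j := not_lt.1 fun hlt => Fin.succ_ne_zero _ <| by
    rw [← iterate_decomposeFin_symm_succ_zero e q hlt, ← hj, iterate_minimalPeriod]
  have h_le := h_periodic.minimalPeriod_le (by omega)
  omega

theorem sameCycle_decomposeFin_symm_succ_zero_succ_iff (q x : Fin m) :
    (decomposeFin.symm (q.succ, e)).SameCycle 0 x.succ ↔ e.SameCycle q x := by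
  refine ⟨fun h => ?_, fun h => ?_⟩
  · by_contra hqx
    obtain ⟨i, hi⟩ := h.symm.exists_nat_pow_eq
    rw [← iterate_eq_pow, iterate_decomposeFin_symm_succ_apply_succ hqx] at hi
    exact Fin.succ_ne_zero _ hi
  · obtain ⟨i, hi⟩ := h.exists_nat_pow_eq
    refine ⟨(i % minimalPeriod e q + 1 : ℕ), ?_⟩
    rw [zpow_natCast, ← iterate_eq_pow, iterate_decomposeFin_symm_succ_zero e q
      (mod_lt _ (minimalPeriod_pos e q)), iterate_mod_minimalPeriod_eq, iterate_eq_pow, hi]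

variable {e} in
theorem minimalPeriod_decomposeFin_symm_succ_succ {q x : Fin m} (h : ¬e.SameCycle q x) :
    minimalPeriod (decomposeFin.symm (q.succ, e)) x.succ = minimalPeriod e x :=
  minimalPeriod_eq_of_iterate_apply (Fin.succ_injective m)
    (iterate_decomposeFin_symm_succ_apply_succ h)

end DecomposeFin

section CycleLengths

variable {α : Type*} (P Q : ℕ → Prop)

def CycleLengthsIn (σ : Perm α) : Prop :=
  ∀ x, P (minimalPeriod σ x)

def CycleLengthsInMarked (a : α) (σ : Perm α) : Prop :=
  Q (minimalPeriod σ a) ∧ ∀ x, ¬σ.SameCycle a x → P (minimalPeriod σ x)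

variable {P Q}

theorem cycleLengthsIn_iff_marked [Finite α] {σ : Perm α} (a : α) :
    CycleLengthsIn P σ ↔ CycleLengthsInMarked P P a σ :=
  ⟨fun h => ⟨h a, fun x _ => h x⟩, fun h x =>
    (em (σ.SameCycle a x)).elim (fun hx => hx.minimalPeriod_eq ▸ h.1) (h.2 x)⟩

theorem cycleLengthsInMarked_conj_iff (c σ : Perm α) (a : α) :
    CycleLengthsInMarked P Q (c a) (c * σ * c⁻¹) ↔ CycleLengthsInMarked P Q a σ := by
  refine and_congr (by rw [minimalPeriod_conj_apply]) ?_
  refine (c.forall_congr_right (q := fun y => ¬_ → P _)).symm.trans (forall_congr' fun x => ?_)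
  rw [sameCycle_conj, minimalPeriod_conj_apply]
  simp only [coe_inv, symm_apply_apply]

variable {m : ℕ} (e : Perm (Fin m))

theorem cycleLengthsInMarked_decomposeFin_symm_zero_iff :
    CycleLengthsInMarked P Q 0 (decomposeFin.symm (0, e)) ↔ Q 1 ∧ CycleLengthsIn P e := by
  simp [CycleLengthsInMarked, CycleLengthsIn, Fin.forall_fin_succ,
    minimalPeriod_decomposeFin_symm_zero_zero, minimalPeriod_decomposeFin_symm_zero_succ,
    sameCycle_decomposeFin_symm_zero_zero_iff]

theorem cycleLengthsInMarked_decomposeFin_symm_succ_iff (q : Fin m) :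
    CycleLengthsInMarked P Q 0 (decomposeFin.symm (q.succ, e)) ↔
      CycleLengthsInMarked P (fun k => Q (k + 1)) q e := by
  simp only [CycleLengthsInMarked, Fin.forall_fin_succ, minimalPeriod_decomposeFin_symm_succ_zero,
    SameCycle.refl, not_true_eq_false, IsEmpty.forall_iff, true_and,
    sameCycle_decomposeFin_symm_succ_zero_succ_iff]
  exact and_congr_right' (forall_congr' fun x => forall_congr' fun hx => by
    rw [minimalPeriod_decomposeFin_symm_succ_succ hx])

end CycleLengths

section Counting

theorem card_perm_fin_succ {m : ℕ} (R : Perm (Fin (m + 1)) → Prop) :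
    Nat.card {σ // R σ} = Nat.card {e : Perm (Fin m) // R (decomposeFin.symm (0, e))} +
      ∑ q : Fin m, Nat.card {e : Perm (Fin m) // R (decomposeFin.symm (q.succ, e))} := by
  rw [← Fin.sum_univ_succ
    (f := fun p => Nat.card {e : Perm (Fin m) // R (decomposeFin.symm (p, e))}), ← Nat.card_sigma]
  exact Nat.card_congr (decomposeFin.symm.subtypeEquivOfSubtype.symm.trans
    (subtypeProdEquivSigmaSubtype fun p e => R (decomposeFin.symm (p, e))))

variable {α : Type*} {P Q : ℕ → Prop}

theorem card_cycleLengthsInMarked_congr (a b : α) :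
    Nat.card {σ : Perm α // CycleLengthsInMarked P Q a σ} =
      Nat.card {σ : Perm α // CycleLengthsInMarked P Q b σ} := by
  classical
  refine Nat.card_congr ((MulAut.conj (swap a b)).toEquiv.subtypeEquiv fun σ => ?_)
  rw [← cycleLengthsInMarked_conj_iff (swap a b), swap_apply_left]
  rfl

end Counting

end Equiv.Perm

namespace CycleParity

variable (P Q : ℕ → Prop)

noncomputable def numPerms (m : ℕ) : ℕ :=
  Nat.card {σ : Perm (Fin m) // CycleLengthsIn P σ}

noncomputable def numMarkedPerms (m : ℕ) : ℕ :=
  Nat.card {σ : Perm (Fin (m + 1)) // CycleLengthsInMarked P Q 0 σ}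

theorem numPerms_zero : numPerms P 0 = 1 := by
  simp [numPerms, CycleLengthsIn]

theorem numPerms_succ (m : ℕ) : numPerms P (m + 1) = numMarkedPerms P P m :=
  Nat.card_congr (subtypeEquivRight fun _ => cycleLengthsIn_iff_marked 0)

theorem numMarkedPerms_eq [DecidablePred Q] (m : ℕ) :
    numMarkedPerms P Q m = (if Q 1 then numPerms P m else 0) + ∑ q : Fin m,
      Nat.card {e : Perm (Fin m) // CycleLengthsInMarked P (fun k => Q (k + 1)) q e} := by
  simp only [numMarkedPerms, card_perm_fin_succ, cycleLengthsInMarked_decomposeFin_symm_zero_iff,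
    cycleLengthsInMarked_decomposeFin_symm_succ_iff]
  split_ifs with h <;> simp [h, numPerms]

theorem sum_card_cycleLengthsInMarked_self (m : ℕ) :
    ∑ q : Fin m, Nat.card {e : Perm (Fin m) // CycleLengthsInMarked P P q e} =
      m * numPerms P m := by
  simp [← cycleLengthsIn_iff_marked, numPerms]

theorem sum_card_cycleLengthsInMarked (k : ℕ) :
    ∑ q : Fin (k + 1), Nat.card {e : Perm (Fin (k + 1)) // CycleLengthsInMarked P Q q e} =
      (k + 1) * numMarkedPerms P Q k := by
  rw [Finset.sum_congr rfl fun q _ => card_cycleLengthsInMarked_congr q 0]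
  simp [numMarkedPerms]

theorem odd_add_one_eq_even : (fun k : ℕ => Odd (k + 1)) = Even :=
  funext fun _ => propext (Nat.odd_add_one.trans not_odd_iff_even)

theorem even_add_one_eq_odd : (fun k : ℕ => Even (k + 1)) = Odd :=
  funext fun _ => propext (Nat.even_add_one.trans not_even_iff_odd)

theorem numPerms_odd_add_two (k : ℕ) :
    numPerms Odd (k + 2) = numPerms Odd (k + 1) + (k + 1) * (k * numPerms Odd k) := by
  have h_marked : numMarkedPerms Odd Even k = k * numPerms Odd k := by
    rw [numMarkedPerms_eq, if_neg not_even_one, even_add_one_eq_odd,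
      sum_card_cycleLengthsInMarked_self, zero_add]
  rw [numPerms_succ, numMarkedPerms_eq, if_pos odd_one, odd_add_one_eq_even,
    sum_card_cycleLengthsInMarked, h_marked]

theorem numPerms_even_add_two (k : ℕ) :
    numPerms Even (k + 2) = (k + 1) * ((k + 1) * numPerms Even k) := by
  have h_marked : numMarkedPerms Even Odd k = (k + 1) * numPerms Even k := by
    rw [numMarkedPerms_eq, if_pos odd_one, odd_add_one_eq_even,
      sum_card_cycleLengthsInMarked_self]
    ring
  rw [numPerms_succ, numMarkedPerms_eq, if_neg not_even_one, even_add_one_eq_odd,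
    sum_card_cycleLengthsInMarked, h_marked, zero_add]

theorem numPerms_odd (n : ℕ) :
    numPerms Odd (2 * n) = (2 * n - 1)‼ ^ 2 ∧
      numPerms Odd (2 * n + 1) = (2 * n + 1)‼ * (2 * n - 1)‼ := by
  induction n with
  | zero =>
    refine ⟨numPerms_zero Odd, ?_⟩
    rw [numPerms_succ, numMarkedPerms_eq, if_pos odd_one, numPerms_zero]
    rfl
  | succ n ih =>
    obtain ⟨h_even, h_odd⟩ := ih
    have h_df : (2 * n + 1)‼ = (2 * n + 1) * (2 * n - 1)‼ := doubleFactorial_add_one (2 * n)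
    have h_next : numPerms Odd (2 * n + 2) = (2 * n + 1)‼ ^ 2 := by
      rw [numPerms_odd_add_two, h_even, h_odd, h_df]
      ring
    rw [show 2 * (n + 1) - 1 = 2 * n + 1 by omega, show 2 * (n + 1) = 2 * n + 2 by ring]
    refine ⟨h_next, ?_⟩
    rw [numPerms_odd_add_two (2 * n + 1), h_next, h_odd, doubleFactorial_add_two, h_df]
    ring

theorem numPerms_even (n : ℕ) : numPerms Even (2 * n) = (2 * n - 1)‼ ^ 2 := by
  induction n with
  | zero => exact numPerms_zero Even
  | succ n ih =>
    rw [show 2 * (n + 1) - 1 = 2 * n + 1 by omega, show 2 * (n + 1) = 2 * n + 2 by ring,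
      numPerms_even_add_two, ih, doubleFactorial_add_one]
    ring

end CycleParity

theorem stmt6_general (n : ℕ) :
    Nat.card {σ : Equiv.Perm (Fin (2 * n)) //
        ∀ x, Odd (Function.minimalPeriod ⇑σ x)} =
      Nat.card {σ : Equiv.Perm (Fin (2 * n)) //
        ∀ x, Even (Function.minimalPeriod ⇑σ x)} ∧
    Nat.card {σ : Equiv.Perm (Fin (2 * n)) //
        ∀ x, Odd (Function.minimalPeriod ⇑σ x)} =
      (Nat.doubleFactorial (2 * n - 1)) ^ 2 :=
  ⟨(CycleParity.numPerms_odd n).1.trans (CycleParity.numPerms_even n).symm,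
    (CycleParity.numPerms_odd n).1⟩

/-- `|Odd(2n)| = |Even(2n)| = ((2n-1)!!)^2`. -/
theorem stmt6 (n : ℕ) (hn : 1 ≤ n) :
    Nat.card {σ : Equiv.Perm (Fin (2 * n)) //
        ∀ x, Odd (Function.minimalPeriod ⇑σ x)} =
      Nat.card {σ : Equiv.Perm (Fin (2 * n)) //
        ∀ x, Even (Function.minimalPeriod ⇑σ x)} ∧
    Nat.card {σ : Equiv.Perm (Fin (2 * n)) //
        ∀ x, Odd (Function.minimalPeriod ⇑σ x)} =
      (Nat.doubleFactorial (2 * n - 1)) ^ 2 :=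
  stmt6_general n
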